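/- arXiv:math/0605539 — 3 statements merged into one kernel-verified Lean document; each statement's English description precedes it below -/
import Mathlib

section
/- Let r₁,…,rₙ be pairwise distinct real numbers, and let A be an n×n quaternion matrix with A·A* = I such that D := A · Diag(r₁,…,rₙ) · A* is a diagonal matrix. Then there exists a permutation w ∈ S_n such that D = Diag(r_{w(1)},…,r_{w(n)}). -/
/-!
Since `A` is invertible with inverse `Aᴴ`, the diagonal matrix `D = A ⬝ Diag(r) ⬝ Aᴴ` satisfies
`D ⬝ A = A ⬝ Diag(r)`, i.e. `D i i * A i j = A i j * r j`. The reals are central in `ℍ` and `ℍ`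
has no zero divisors, so `D i i = r j` whenever `A i j ≠ 0`. Every row and every column of the
invertible matrix `A` has a nonzero entry, so the diagonal entries of `D` and the `r j` take the
same values; as the `r j` are distinct, this forces `D` to be a permutation of `Diag(r)`.
-/

open Matrix

theorem Function.exists_perm_eq_comp_of_forall_exists {ι α : Type*} [Finite ι] {d e : ι → α}
    (he : Function.Injective e) (hd : ∀ i, ∃ j, d i = e j) (hsurj : ∀ j, ∃ i, d i = e j) :
    ∃ w : Equiv.Perm ι, d = e ∘ w := by
  choose f hf using hd
  have hf_surj : Function.Surjective f := fun j =>
    let ⟨i, hi⟩ := hsurj j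
    ⟨i, he ((hf i).symm.trans hi)⟩
  exact ⟨Equiv.ofBijective f (Finite.surjective_iff_bijective.mp hf_surj), funext hf⟩

namespace Matrix

variable {m n R : Type*}

theorem exists_ne_zero_in_row_of_mul_eq_one [Fintype n] [DecidableEq m] [Semiring R]
    [Nontrivial R] {A : Matrix m n R} {B : Matrix n m R} (h : A * B = 1) (i : m) :
    ∃ j, A i j ≠ 0 := by
  by_contra! hrow
  simpa [mul_apply, hrow] using congrFun (congrFun h i) i

theorem exists_ne_zero_in_col_of_mul_eq_one [Fintype m] [DecidableEq n] [Semiring R]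
    [Nontrivial R] {A : Matrix m n R} {B : Matrix n m R} (h : B * A = 1) (j : n) :
    ∃ i, A i j ≠ 0 := by
  by_contra! hcol
  simpa [mul_apply, hcol] using congrFun (congrFun h j) j

theorem apply_eq_of_diagonal_mul_eq_mul_diagonal [Fintype m] [DecidableEq m] [Fintype n]
    [DecidableEq n] [Ring R] [NoZeroDivisors R] {d : m → R} {e : n → R} {A : Matrix m n R}
    (h : diagonal d * A = A * diagonal e) {i : m} {j : n} (hA : A i j ≠ 0)
    (he : Commute (A i j) (e j)) : d i = e j := by
  have hij := congrFun (congrFun h i) j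
  rw [diagonal_mul, mul_diagonal, he.eq] at hij
  exact mul_right_cancel₀ hA hij

end Matrix

/-- If `r₁,…,rₙ` are pairwise distinct reals, `A ⬝ A* = I`, and
`D = A ⬝ Diag(r₁,…,rₙ) ⬝ A*` is diagonal, then `D = Diag(r_{w(1)},…,r_{w(n)})` for some
permutation `w ∈ S_n`. -/
theorem diagonal_in_orbit_is_permuted (n : ℕ) (r : Fin n → ℝ)
    (hr : Function.Injective r) (A : Matrix (Fin n) (Fin n) (Quaternion ℝ))
    (hA : A * Aᴴ = 1)
    (hD : (A * Matrix.diagonal (fun ν => (r ν : Quaternion ℝ)) * Aᴴ).IsDiag) :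
    ∃ w : Equiv.Perm (Fin n),
      A * Matrix.diagonal (fun ν => (r ν : Quaternion ℝ)) * Aᴴ =
        Matrix.diagonal (fun ν => (r (w ν) : Quaternion ℝ)) := by
  set D := A * diagonal (fun ν => (r ν : Quaternion ℝ)) * Aᴴ
  -- matrix rings over a division ring are stably finite, hence Dedekind finite
  have hA' : Aᴴ * A = 1 := mul_eq_one_comm.mp hA
  have hDA : diagonal D.diag * A = A * diagonal (fun ν => (r ν : Quaternion ℝ)) := by
    rw [hD.diagonal_diag, Matrix.mul_assoc _ Aᴴ, hA', Matrix.mul_one]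
  have hentry : ∀ i j, A i j ≠ 0 → D.diag i = r j := fun i j hij =>
    apply_eq_of_diagonal_mul_eq_mul_diagonal hDA hij (Quaternion.coe_commutes _ _).symm
  obtain ⟨w, hw⟩ := Function.exists_perm_eq_comp_of_forall_exists
    (Quaternion.coe_injective.comp hr)
    (fun i => (exists_ne_zero_in_row_of_mul_eq_one hA i).imp (hentry i))
    (fun j => (exists_ne_zero_in_col_of_mul_eq_one hA' j).imp fun i => hentry i j)
  exact ⟨w, by rw [← hD.diagonal_diag, hw]; rfl⟩
end

section
/- Fix a permutation w ∈ S_n and indices 1 ≤ p < q ≤ n, and let K' be the set of n×n quaternion matrices B with B·B* = I whose entries vanish except on the diagonal and at the positions (w(p),w(q)) and (w(q),w(p)). Then the set of n-tuples of lines (ℍ(e_{w(1)}·B*), …, ℍ(e_{w(n)}·B*)) for B ∈ K' equals the set of all n-tuples (L₁,…,Lₙ) of nonzero ℍ-lines in ℍⁿ such that L_ν = ℍe_{w(ν)} for all ν ∉ {p,q}, and L_p and L_q are mutually orthogonal ℍ-lines contained in the submodule ℍe_{w(p)} ⊕ ℍe_{w(q)}. -/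
/-!
Put `A = Bᴴ`. Then `e_{w ν} ⬝ Bᴴ` is the row `A (w ν)`, and `B Bᴴ = 1` (equivalently `Bᴴ B = 1`,
matrices over a division ring being Dedekind-finite) says that the rows of `A` are orthonormal
for `qForm`, because `(A Aᴴ) i j = qForm (A i) (A j)`. The support condition makes each row
`A (w ν)` with `ν ∉ {p, q}` a multiple of `e_{w ν}` and puts the two remaining rows in
`ℍe_{w p} ⊕ ℍe_{w q}`. Conversely, normalising generators of `L_p` and `L_q` gives an
orthonormal pair in that plane, which together with the other standard basis vectors are the
rows of a matrix of the required shape.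
-/

open Matrix

noncomputable def qForm (n : ℕ) (h k : Fin n → Quaternion ℝ) : Quaternion ℝ :=
  ∑ i : Fin n, h i * star (k i)

open Quaternion Submodule

section qForm

variable {n : ℕ}

lemma qForm_smul_left (a : ℍ) (h k : Fin n → ℍ) : qForm n (a • h) k = a * qForm n h k := by
  simp [qForm, Finset.mul_sum, mul_assoc]

lemma qForm_smul_right (b : ℍ) (h k : Fin n → ℍ) :
    qForm n h (b • k) = qForm n h k * star b := by
  simp [qForm, Finset.sum_mul, mul_assoc]

lemma star_qForm (h k : Fin n → ℍ) : star (qForm n h k) = qForm n k h := by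
  simp [qForm, star_sum]

lemma qForm_single_right (v : Fin n → ℍ) (i : Fin n) : qForm n v (Pi.single i 1) = v i := by
  simp [qForm, Pi.single_apply, apply_ite (star : ℍ → ℍ)]

lemma qForm_single_left (v : Fin n → ℍ) (i : Fin n) :
    qForm n (Pi.single i 1) v = star (v i) := by
  rw [← star_qForm, qForm_single_right]

lemma qForm_self (v : Fin n → ℍ) : qForm n v v = ((∑ i, normSq (v i) : ℝ) : ℍ) := by
  simp only [qForm, self_mul_star, ← algebraMap_def, map_sum]

lemma ne_zero_of_qForm_self_eq_one {v : Fin n → ℍ} (hv : qForm n v v = 1) : v ≠ 0 := by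
  rintro rfl
  simp [qForm] at hv

lemma exists_qForm_smul_self_eq_one {v : Fin n → ℍ} (hv : v ≠ 0) :
    ∃ c : ℍ, c ≠ 0 ∧ qForm n (c • v) (c • v) = 1 := by
  set s := ∑ i, normSq (v i)
  have hs : 0 < s := by
    obtain ⟨i, hi⟩ := Function.ne_iff.mp hv
    exact Finset.sum_pos' (fun _ _ => normSq_nonneg) ⟨i, Finset.mem_univ _,
      normSq_nonneg.lt_of_ne' (normSq_ne_zero.mpr hi)⟩
  have hsqrt : Real.sqrt s ≠ 0 := (Real.sqrt_pos.mpr hs).ne'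
  have hnormalize : (Real.sqrt s)⁻¹ * s * (Real.sqrt s)⁻¹ = 1 := by
    field_simp
    exact (Real.sq_sqrt hs.le).symm
  refine ⟨((Real.sqrt s)⁻¹ : ℝ), ?_, ?_⟩
  · rw [Ne, ← Quaternion.coe_zero, coe_inj]
    exact inv_ne_zero hsqrt
  rw [qForm_smul_left, qForm_smul_right, qForm_self, star_coe, ← coe_mul, ← coe_mul,
    ← mul_assoc, hnormalize, coe_one]

lemma qForm_eq_zero_of_mem_span_singleton {u u' h k : Fin n → ℍ} (huu' : qForm n u u' = 0)
    (hh : h ∈ ℍ ∙ u) (hk : k ∈ ℍ ∙ u') : qForm n h k = 0 := by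
  obtain ⟨a, rfl⟩ := mem_span_singleton.mp hh
  obtain ⟨b, rfl⟩ := mem_span_singleton.mp hk
  rw [qForm_smul_left, qForm_smul_right, huu', zero_mul, mul_zero]

lemma mul_conjTranspose_apply_eq_qForm (A : Matrix (Fin n) (Fin n) ℍ) (i j : Fin n) :
    (A * Aᴴ) i j = qForm n (A i) (A j) := by
  simp [qForm, mul_apply]

end qForm

section PairSupport

variable {ι R : Type*}

lemma mem_span_pair_single_iff [Semiring R] [DecidableEq ι] {a b : ι} (hab : a ≠ b)
    {v : ι → R} :
    v ∈ span R {Pi.single a 1, Pi.single b 1} ↔ ∀ j, j ≠ a → j ≠ b → v j = 0 := by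
  constructor
  · intro hv j ha hb
    obtain ⟨x, y, rfl⟩ := mem_span_pair.mp hv
    simp [ha, hb]
  · intro hv
    refine mem_span_pair.mpr ⟨v a, v b, funext fun j => ?_⟩
    by_cases ha : j = a
    · subst ha; simp [hab]
    by_cases hb : j = b
    · subst hb; simp [Ne.symm hab]
    simp [ha, hb, hv j ha hb]

def Matrix.IsPairSupported [Zero R] (a b : ι) (A : Matrix ι ι R) : Prop :=
  ∀ i j, i ≠ j → (i, j) ≠ (a, b) → (i, j) ≠ (b, a) → A i j = 0

namespace Matrix.IsPairSupported

variable {a b : ι} {A : Matrix ι ι R}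

lemma conjTranspose [AddMonoid R] [StarAddMonoid R] (hA : A.IsPairSupported a b) :
    Aᴴ.IsPairSupported a b := by
  intro i j hij hab hba
  rw [conjTranspose_apply, hA j i hij.symm (by simpa [and_comm] using hba)
    (by simpa [and_comm] using hab), star_zero]

lemma symm [Zero R] (hA : A.IsPairSupported a b) : A.IsPairSupported b a :=
  fun i j hij hba hab => hA i j hij hab hba

lemma row_mem_span_pair [Semiring R] [DecidableEq ι] (hA : A.IsPairSupported a b)
    (hab : a ≠ b) : A a ∈ span R {Pi.single a 1, Pi.single b 1} :=
  (mem_span_pair_single_iff hab).mpr fun j ha hb =>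
    hA a j (Ne.symm ha) (by simpa using hb) (by simp [hab])

lemma row_eq_smul_single [Semiring R] [DecidableEq ι] (hA : A.IsPairSupported a b) {i : ι}
    (ha : i ≠ a) (hb : i ≠ b) : A i = A i i • Pi.single i 1 := by
  funext j
  by_cases hij : i = j
  · subst hij; simp
  · simp [Ne.symm hij, hA i j hij (by simp [ha]) (by simp [hb])]

end Matrix.IsPairSupported

end PairSupport

section Symplectic

variable {n : ℕ}

lemma row_ne_zero_of_mul_conjTranspose_eq_one {A : Matrix (Fin n) (Fin n) ℍ}
    (hA : A * Aᴴ = 1) (i : Fin n) : A i ≠ 0 :=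
  ne_zero_of_qForm_self_eq_one (by rw [← mul_conjTranspose_apply_eq_qForm, hA, one_apply_eq])

lemma qForm_row_eq_zero_of_mul_conjTranspose_eq_one {A : Matrix (Fin n) (Fin n) ℍ}
    (hA : A * Aᴴ = 1) {i j : Fin n} (hij : i ≠ j) : qForm n (A i) (A j) = 0 := by
  rw [← mul_conjTranspose_apply_eq_qForm, hA, one_apply_ne hij]

lemma span_row_eq_span_single {A : Matrix (Fin n) (Fin n) ℍ} (hA : A * Aᴴ = 1) {a b i : Fin n}
    (hsupp : A.IsPairSupported a b) (ha : i ≠ a) (hb : i ≠ b) :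
    ℍ ∙ A i = ℍ ∙ Pi.single i 1 := by
  have hrow := hsupp.row_eq_smul_single ha hb
  have hdiag : A i i ≠ 0 := fun h =>
    row_ne_zero_of_mul_conjTranspose_eq_one hA i (by simp [hrow, h])
  rw [hrow, span_singleton_smul_eq hdiag.isUnit]

noncomputable def pairMatrix (a b : Fin n) (u u' : Fin n → ℍ) : Matrix (Fin n) (Fin n) ℍ :=
  of fun i => if i = a then u else if i = b then u' else Pi.single i 1

variable {a b : Fin n} {u u' : Fin n → ℍ}

lemma pairMatrix_apply_left : pairMatrix a b u u' a = u :=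
  if_pos rfl

lemma pairMatrix_apply_right (hab : a ≠ b) : pairMatrix a b u u' b = u' :=
  (if_neg hab.symm).trans (if_pos rfl)

lemma pairMatrix_apply_of_ne {i : Fin n} (ha : i ≠ a) (hb : i ≠ b) :
    pairMatrix a b u u' i = Pi.single i 1 :=
  (if_neg ha).trans (if_neg hb)

lemma isPairSupported_pairMatrix (hab : a ≠ b) (hu : u ∈ span ℍ {Pi.single a 1, Pi.single b 1})
    (hu' : u' ∈ span ℍ {Pi.single a 1, Pi.single b 1}) :
    (pairMatrix a b u u').IsPairSupported a b := by
  intro i j hij hab' hba'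
  rcases eq_or_ne i a with rfl | hia
  · rw [pairMatrix_apply_left]
    exact (mem_span_pair_single_iff hab).mp hu j (Ne.symm hij) (by simpa using hab')
  rcases eq_or_ne i b with rfl | hib
  · rw [pairMatrix_apply_right hab]
    exact (mem_span_pair_single_iff hab).mp hu' j (by simpa using hba') (Ne.symm hij)
  rw [pairMatrix_apply_of_ne hia hib, Pi.single_eq_of_ne' hij]

lemma pairMatrix_mul_conjTranspose (hab : a ≠ b)
    (hu : u ∈ span ℍ {Pi.single a 1, Pi.single b 1})
    (hu' : u' ∈ span ℍ {Pi.single a 1, Pi.single b 1}) (huu : qForm n u u = 1)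
    (hu'u' : qForm n u' u' = 1) (huu' : qForm n u u' = 0) :
    pairMatrix a b u u' * (pairMatrix a b u u')ᴴ = 1 := by
  have hu'u : qForm n u' u = 0 := by rw [← star_qForm, huu', star_zero]
  have hu0 := (mem_span_pair_single_iff hab).mp hu
  have hu'0 := (mem_span_pair_single_iff hab).mp hu'
  have hrow (i : Fin n) : pairMatrix a b u u' i =
      if i = a then u else if i = b then u' else Pi.single i 1 := rfl
  refine Matrix.ext fun i j => ?_
  rw [mul_conjTranspose_apply_eq_qForm, one_apply, hrow, hrow]
  split_ifs <;> subst_vars <;>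
    simp_all [qForm_single_left, qForm_single_right, eq_comm]

lemma exists_mul_conjTranspose_eq_one_of_orthogonal (hab : a ≠ b) {v v' : Fin n → ℍ}
    (hv : v ≠ 0) (hv' : v' ≠ 0) (hvs : v ∈ span ℍ {Pi.single a 1, Pi.single b 1})
    (hv's : v' ∈ span ℍ {Pi.single a 1, Pi.single b 1}) (hvv' : qForm n v v' = 0) :
    ∃ A : Matrix (Fin n) (Fin n) ℍ, A * Aᴴ = 1 ∧ A.IsPairSupported a b ∧
      ℍ ∙ A a = ℍ ∙ v ∧ ℍ ∙ A b = ℍ ∙ v' ∧ ∀ i, i ≠ a → i ≠ b → A i = Pi.single i 1 := by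
  obtain ⟨c, hc, hcv⟩ := exists_qForm_smul_self_eq_one hv
  obtain ⟨c', hc', hcv'⟩ := exists_qForm_smul_self_eq_one hv'
  have hu := smul_mem _ c hvs
  have hu' := smul_mem _ c' hv's
  have huu' : qForm n (c • v) (c' • v') = 0 := by
    rw [qForm_smul_left, qForm_smul_right, hvv', zero_mul, mul_zero]
  refine ⟨pairMatrix a b (c • v) (c' • v'), pairMatrix_mul_conjTranspose hab hu hu' hcv hcv' huu',
    isPairSupported_pairMatrix hab hu hu', ?_, ?_, fun i => pairMatrix_apply_of_ne⟩
  · rw [pairMatrix_apply_left, span_singleton_smul_eq hc.isUnit]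
  · rw [pairMatrix_apply_right hab, span_singleton_smul_eq hc'.isUnit]

end Symplectic

/-- Description of the four-sphere `𝒮_{w,pq}` as a quaternionic projective line: the
orbit of the flag `(ℍe_{w(1)},…,ℍe_{w(n)})` under the subgroup `K'` of symplectic
matrices supported on the diagonal and the positions `(w(p),w(q))`, `(w(q),w(p))`
equals the set of tuples of lines `(L₁,…,Lₙ)` with `L_ν = ℍe_{w(ν)}` for `ν ∉ {p,q}`
and `L_p, L_q` mutually orthogonal lines in `ℍe_{w(p)} ⊕ ℍe_{w(q)}`. -/
theorem sphere_Swpq_description (n : ℕ) (w : Equiv.Perm (Fin n)) (p q : Fin n)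
    (hpq : p < q) :
    {L : Fin n → Submodule (Quaternion ℝ) (Fin n → Quaternion ℝ) |
        ∃ B : Matrix (Fin n) (Fin n) (Quaternion ℝ), B * Bᴴ = 1 ∧
          (∀ i j : Fin n, i ≠ j → (i, j) ≠ (w p, w q) → (i, j) ≠ (w q, w p) → B i j = 0) ∧
          ∀ ν : Fin n, L ν = Submodule.span (Quaternion ℝ)
            {Matrix.vecMul (Pi.single (w ν) (1 : Quaternion ℝ)) Bᴴ}} =
      {L : Fin n → Submodule (Quaternion ℝ) (Fin n → Quaternion ℝ) |
        (∀ ν : Fin n, ∃ v : Fin n → Quaternion ℝ, v ≠ 0 ∧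
          L ν = Submodule.span (Quaternion ℝ) {v}) ∧
        (∀ ν : Fin n, ν ≠ p → ν ≠ q →
          L ν = Submodule.span (Quaternion ℝ) {Pi.single (w ν) (1 : Quaternion ℝ)}) ∧
        (∀ h ∈ L p, ∀ k ∈ L q, qForm n h k = 0) ∧
        L p ≤ Submodule.span (Quaternion ℝ)
          {Pi.single (w p) (1 : Quaternion ℝ), Pi.single (w q) (1 : Quaternion ℝ)} ∧
        L q ≤ Submodule.span (Quaternion ℝ)
          {Pi.single (w p) (1 : Quaternion ℝ), Pi.single (w q) (1 : Quaternion ℝ)}} := by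
  have hw : w p ≠ w q := w.injective.ne hpq.ne
  ext L
  constructor
  · rintro ⟨B, hB, hsupp, hL⟩
    have hA : Bᴴ * Bᴴᴴ = 1 := by rw [conjTranspose_conjTranspose]; exact mul_eq_one_comm.mp hB
    replace hsupp : Bᴴ.IsPairSupported (w p) (w q) := Matrix.IsPairSupported.conjTranspose hsupp
    simp only [single_one_vecMul, row] at hL
    refine ⟨fun ν => ⟨_, row_ne_zero_of_mul_conjTranspose_eq_one hA _, hL ν⟩,
      fun ν hp hq => ?_, ?_, ?_, ?_⟩
    · rw [hL, span_row_eq_span_single hA hsupp (w.injective.ne hp) (w.injective.ne hq)]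
    · rw [hL, hL]
      exact fun h hh k hk => qForm_eq_zero_of_mem_span_singleton
        (qForm_row_eq_zero_of_mul_conjTranspose_eq_one hA hw) hh hk
    · rw [hL, span_singleton_le_iff_mem]
      exact hsupp.row_mem_span_pair hw
    · rw [hL, span_singleton_le_iff_mem, Set.pair_comm]
      exact hsupp.symm.row_mem_span_pair hw.symm
  · rintro ⟨hspan, hfix, horth, hLp, hLq⟩
    obtain ⟨v, hv, hLv⟩ := hspan p
    obtain ⟨v', hv', hLv'⟩ := hspan q
    have hvL : v ∈ L p := hLv ▸ mem_span_singleton_self v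
    have hv'L : v' ∈ L q := hLv' ▸ mem_span_singleton_self v'
    obtain ⟨A, hA, hsupp, hAp, hAq, hA_fix⟩ := exists_mul_conjTranspose_eq_one_of_orthogonal hw
      hv hv' (hLp hvL) (hLq hv'L) (horth v hvL v' hv'L)
    refine ⟨Aᴴ, by rw [conjTranspose_conjTranspose]; exact mul_eq_one_comm.mp hA,
      hsupp.conjTranspose, fun ν => ?_⟩
    rw [conjTranspose_conjTranspose, single_one_vecMul, row]
    rcases eq_or_ne ν p with rfl | hp
    · rw [hAp, hLv]
    rcases eq_or_ne ν q with rfl | hq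
    · rw [hAq, hLv']
    rw [hA_fix _ (w.injective.ne hp) (w.injective.ne hq), hfix ν hp hq]
end

section
/- Every element of the subring 𝒢 lies in the image of the ring homomorphism from ℤ[x₁,…,xₙ,u₁,…,uₙ] to ∏_{w∈S_n} ℤ[u₁,…,uₙ] sending x_ν to the tuple (u_{w(ν)})_{w∈S_n} and u_ν to the constant tuple with every entry u_ν; that is, this homomorphism maps ℤ[x₁,…,xₙ,u₁,…,uₙ] onto 𝒢. -/
open MvPolynomial

/-- The GKM set: tuples `(f_w)_{w ∈ S_n}` of polynomials in `ℤ[u₁,…,uₙ]` such that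
`u_p - u_q` divides `f_w - f_{s_{pq} w}` for all `w` and all `p < q`. -/
def gkmSet (n : ℕ) : Set (Equiv.Perm (Fin n) → MvPolynomial (Fin n) ℤ) :=
  {f | ∀ w : Equiv.Perm (Fin n), ∀ p q : Fin n, p < q →
    (X p - X q : MvPolynomial (Fin n) ℤ) ∣ (f w - f (Equiv.swap p q * w))}

/-- The ring homomorphism `ℤ[x₁,…,xₙ,u₁,…,uₙ] → ∏_{w ∈ S_n} ℤ[u₁,…,uₙ]` sending
`x_ν` to the tuple `(u_{w(ν)})_w` and `u_ν` to the constant tuple `u_ν`. -/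
noncomputable def borelHom (n : ℕ) :
    MvPolynomial (Fin n ⊕ Fin n) ℤ →+* (Equiv.Perm (Fin n) → MvPolynomial (Fin n) ℤ) :=
  eval₂Hom (Int.castRingHom _)
    (Sum.elim (fun ν => fun w => X (w ν)) (fun ν => fun _ => X ν))

/-!
Order permutations lexicographically by their sequences of values. For `w ∈ S_n` the class
`τ_w = ∏_{i < j, w j < w i} (x_i - u_{w j})` (`inversionClass w`) localizes to `0` at every
`v < w`: at the first position `i` where `v` and `w` differ, `v i < w i` and `v i = w j` for
some `j > i`. At `w` it localizes to `Δ_w = ∏_{i < j, w j < w i} (u_{w i} - u_{w j})`.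

If `f ∈ 𝒢` vanishes at every `v < w`, then each factor `u_{w i} - u_{w j}` of `Δ_w` divides
`f_w`, since `s_{w i, w j} w = w s_{ij} < w`. These factors are pairwise non-associated
irreducibles of the factorial ring `ℤ[u]`, so `f_w = Δ_w c` and `f - τ_w c` vanishes at every
`v ≤ w`. Induction along the finite lexicographic order finishes the proof.
-/

open Equiv

namespace MvPolynomial

variable {σ R : Type*} [CommRing R]

theorem irreducible_X_sub_X [IsDomain R] {a b : σ} (hab : a ≠ b) :
    Irreducible (X a - X b : MvPolynomial σ R) := by
  classical
  have : (X a - X b : MvPolynomial σ R) =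
      sumSMulX (Finsupp.single a 1 - Finsupp.single b 1) := by
    simp [sumSMulX, Finsupp.linearCombination_single]
  rw [this]
  refine irreducible_sumSMulX _ ⟨a, by simp [hab]⟩ fun r hr => isUnit_of_dvd_one ?_
  simpa [hab] using hr a

theorem X_sub_X_dvd_X_sub_X_swap [DecidableEq σ] (a b k : σ) :
    (X a - X b : MvPolynomial σ R) ∣ X k - X (swap a b k) := by
  rw [swap_apply_def]
  split_ifs with hka hkb
  · rw [hka]
  · rw [hkb, dvd_sub_comm]
  · rw [sub_self]
    exact dvd_zero _

theorem not_X_sub_X_dvd_X_sub_X [LinearOrder σ] [Nontrivial R] {a b c d : σ} (hab : b < a)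
    (hcd : d < c) (hne : (a, b) ≠ (c, d)) : ¬ (X a - X b : MvPolynomial σ R) ∣ X c - X d := by
  obtain ⟨e, hea, heb, he⟩ : ∃ e, e ≠ a ∧ e ≠ b ∧ (e = c ∨ e = d) := by
    by_cases hc : c = a ∨ c = b
    · refine ⟨d, ?_, ?_, Or.inr rfl⟩ <;> grind
    · exact ⟨c, by grind⟩
  intro h
  have heval := map_dvd (eval (Pi.single e (1 : R))) h
  rcases he with rfl | rfl <;> simp [hea.symm, heb.symm, hcd.ne, hcd.ne'] at heval

end MvPolynomial

namespace Equiv.Perm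

variable {α : Type*} [LinearOrder α]

def inversions [Fintype α] (w : Perm α) : Finset (α × α) :=
  {p | p.1 < p.2 ∧ w p.2 < w p.1}

@[simp]
theorem mem_inversions [Fintype α] {w : Perm α} {p : α × α} :
    p ∈ w.inversions ↔ p.1 < p.2 ∧ w p.2 < w p.1 := by
  simp [inversions]

noncomputable abbrev lexLinearOrder [WellFoundedLT α] : LinearOrder (Perm α) :=
  LinearOrder.lift' (fun w => toLex ⇑w) (toLex.injective.comp DFunLike.coe_injective)

end Equiv.Perm

attribute [local instance] Equiv.Perm.lexLinearOrder

namespace Equiv.Perm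

variable {α : Type*} [LinearOrder α] [WellFoundedLT α]

theorem lt_iff_exists_forall_lt_eq {v w : Perm α} :
    v < w ↔ ∃ i, (∀ j < i, v j = w j) ∧ v i < w i :=
  Iff.rfl

theorem mul_swap_lt_self {w : Perm α} {i j : α} (hij : i < j) (hw : w j < w i) :
    w * swap i j < w :=
  Pi.lex_desc hij.le hw

end Equiv.Perm

section

variable {n : ℕ}

theorem borelHom_apply (P : MvPolynomial (Fin n ⊕ Fin n) ℤ) (v : Perm (Fin n)) :
    borelHom n P v = aeval (Sum.elim (fun ν => X (v ν)) X) P := by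
  induction P using MvPolynomial.induction_on with
  | C a => simp [borelHom]
  | add p q hp hq => simp [hp, hq]
  | mul_X p s hp => cases s <;> simp_all [borelHom]

@[simp]
theorem borelHom_X_inl (i : Fin n) : borelHom n (X (Sum.inl i)) = fun w => X (w i) := by
  simp [borelHom]

@[simp]
theorem borelHom_X_inr (i : Fin n) : borelHom n (X (Sum.inr i)) = fun _ => X i := by
  simp [borelHom]

@[simp]
theorem borelHom_rename_inr (c : MvPolynomial (Fin n) ℤ) :
    borelHom n (rename Sum.inr c) = fun _ => c := by
  funext v
  rw [borelHom_apply, aeval_rename]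
  exact aeval_X_left_apply c

theorem borelHom_mem_gkmSet (P : MvPolynomial (Fin n ⊕ Fin n) ℤ) :
    borelHom n P ∈ gkmSet n := by
  intro w p q _
  set I := Ideal.span {(X p - X q : MvPolynomial (Fin n) ℤ)}
  have hX (k : Fin n) : Ideal.Quotient.mk I (X k) = Ideal.Quotient.mk I (X (swap p q k)) :=
    Ideal.Quotient.eq.2 (Ideal.mem_span_singleton.2 (X_sub_X_dvd_X_sub_X_swap p q k))
  rw [← Ideal.mem_span_singleton, ← Ideal.Quotient.eq, ← Ideal.Quotient.mkₐ_eq_mk ℤ,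
    borelHom_apply, borelHom_apply, ← AlgHom.comp_apply, ← AlgHom.comp_apply, comp_aeval,
    comp_aeval]
  congr 2
  funext s
  cases s
  exacts [hX _, rfl]

theorem sub_mem_gkmSet {f g : Perm (Fin n) → MvPolynomial (Fin n) ℤ} (hf : f ∈ gkmSet n)
    (hg : g ∈ gkmSet n) : f - g ∈ gkmSet n := fun w p q hpq => by
  simpa only [Pi.sub_apply, sub_sub_sub_comm] using dvd_sub (hf w p q hpq) (hg w p q hpq)

noncomputable def inversionClass (w : Perm (Fin n)) : MvPolynomial (Fin n ⊕ Fin n) ℤ :=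
  ∏ p ∈ w.inversions, (X (Sum.inl p.1) - X (Sum.inr (w p.2)))

theorem borelHom_inversionClass (w v : Perm (Fin n)) :
    borelHom n (inversionClass w) v = ∏ p ∈ w.inversions, (X (v p.1) - X (w p.2)) := by
  simp [inversionClass, Finset.prod_apply]

theorem borelHom_inversionClass_of_lt {v w : Perm (Fin n)} (hvw : v < w) :
    borelHom n (inversionClass w) v = 0 := by
  obtain ⟨i, hprefix, hlt⟩ := Perm.lt_iff_exists_forall_lt_eq.1 hvw
  obtain ⟨j, hj⟩ := w.surjective (v i)
  have hij : i < j := by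
    refine lt_of_le_of_ne (not_lt.1 fun hji => ?_) fun hij => hlt.ne (by rw [← hj, hij])
    rw [← hprefix j hji, v.injective.eq_iff] at hj
    exact hji.ne hj
  rw [borelHom_inversionClass]
  exact Finset.prod_eq_zero (i := (i, j)) (Perm.mem_inversions.2 ⟨hij, hj ▸ hlt⟩)
    (by simp [hj])

theorem prod_inversions_dvd_of_forall_lt_eq_zero {f : Perm (Fin n) → MvPolynomial (Fin n) ℤ}
    (hf : f ∈ gkmSet n) {w : Perm (Fin n)} (hvan : ∀ v < w, f v = 0) :
    ∏ p ∈ w.inversions, (X (w p.1) - X (w p.2)) ∣ f w := by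
  refine Finset.prod_dvd_of_isRelPrime (fun p hp q hq hpq => ?_) fun p hp => ?_
  · rw [Finset.mem_coe, Perm.mem_inversions] at hp hq
    refine (irreducible_X_sub_X (w.injective.ne hp.1.ne)).isRelPrime_iff_not_dvd.2
      (not_X_sub_X_dvd_X_sub_X hp.2 hq.2 fun h => hpq ?_)
    simp only [Prod.mk.injEq, w.injective.eq_iff] at h
    exact Prod.ext h.1 h.2
  · rw [Perm.mem_inversions] at hp
    have hdvd := hf w _ _ hp.2
    rw [← mul_swap_eq_swap_mul, swap_comm, hvan _ (Perm.mul_swap_lt_self hp.1 hp.2),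
      sub_zero] at hdvd
    rwa [← neg_sub, neg_dvd]

theorem exists_borelHom_eq_of_le {f : Perm (Fin n) → MvPolynomial (Fin n) ℤ}
    (hf : f ∈ gkmSet n) {w : Perm (Fin n)} (hvan : ∀ v < w, f v = 0) :
    ∃ Q, ∀ v ≤ w, borelHom n Q v = f v := by
  obtain ⟨c, hc⟩ := prod_inversions_dvd_of_forall_lt_eq_zero hf hvan
  refine ⟨inversionClass w * rename Sum.inr c, fun v hv => ?_⟩
  rcases hv.lt_or_eq with hv | rfl
  · simp [borelHom_inversionClass_of_lt hv, hvan v hv]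
  · simp [borelHom_inversionClass, hc]

theorem mem_range_borelHom_of_forall_lt_eq_zero (w : Perm (Fin n)) :
    ∀ f ∈ gkmSet n, (∀ v < w, f v = 0) → f ∈ (borelHom n).range := by
  induction w using WellFoundedGT.induction with
  | _ w ih =>
    intro f hf hvan
    obtain ⟨Q, hQ⟩ := exists_borelHom_eq_of_le hf hvan
    set g := f - borelHom n Q
    have hg : g ∈ gkmSet n := sub_mem_gkmSet hf (borelHom_mem_gkmSet Q)
    have hg_le (v : Perm (Fin n)) (hv : v ≤ w) : g v = 0 := sub_eq_zero.2 (hQ v hv).symm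
    suffices g ∈ (borelHom n).range by
      simpa [g] using add_mem this (RingHom.mem_range_self _ Q)
    by_cases hg0 : g = 0
    · rw [hg0]
      exact zero_mem _
    obtain ⟨w', hw', hmin⟩ := wellFounded_lt.has_min {v | g v ≠ 0} (Function.ne_iff.1 hg0)
    exact ih w' (lt_of_not_ge fun h => hw' (hg_le w' h)) g hg
      fun v hv => not_not.1 fun h => hmin v h hv

end

theorem gkmSet_subset_range_borelHom_general (n : ℕ) :
    ∀ f ∈ gkmSet n, ∃ P : MvPolynomial (Fin n ⊕ Fin n) ℤ, borelHom n P = f := by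
  intro f hf
  obtain ⟨w, -, hmin⟩ :=
    wellFounded_lt.has_min (Set.univ : Set (Perm (Fin n))) Set.univ_nonempty
  exact mem_range_borelHom_of_forall_lt_eq_zero w f hf fun v hv => (hmin v trivial hv).elim

/-- Surjectivity onto the GKM subring: every element of `𝒢` lies in the image of the
homomorphism `ℤ[x₁,…,xₙ,u₁,…,uₙ] → ∏_{w ∈ S_n} ℤ[u₁,…,uₙ]`. -/
theorem gkmSet_subset_range_borelHom (n : ℕ) (hn : 1 ≤ n) :
    ∀ f ∈ gkmSet n, ∃ P : MvPolynomial (Fin n ⊕ Fin n) ℤ, borelHom n P = f :=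
  gkmSet_subset_range_borelHom_general n
end
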